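/- Let φ, φ̃ : M → N be two smooth maps expressed in the same local charts, with corresponding local variables v₀ = du₀ and ṽ₀ = dũ₀. Then on any open set D whose closure is compact and contained in the chart domain, there exists a constant C > 0 such that |Δ(dφ − dφ̃)| ≤ C( |φ − φ̃| + |dφ − dφ̃| + |∇dφ − ∇dφ̃| + |v₀ − ṽ₀| ), where dφ = (φ_i^α) denotes the collection of first partial derivatives, ∇dφ the second fundamental form, and Δ acts componentwise on the ℝ^{mn}-valued function (φ_i^α). -/

import Mathlib

noncomputable section

open scoped BigOperators

namespace Polyharm

/-- Partial derivative of a scalar function on `ℝ^d` in the `i`-th coordinate direction. -/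
def pd {d : ℕ} (i : Fin d) (f : (Fin d → ℝ) → ℝ) (x : Fin d → ℝ) : ℝ :=
  fderiv ℝ f x (Pi.single i 1)

/-- Euclidean norm of a finite family of real numbers. -/
def vnorm {ι : Type} [Fintype ι] (f : ι → ℝ) : ℝ :=
  Real.sqrt (∑ i, f i ^ 2)

/-- Local-coordinate data for maps between Riemannian manifolds: the inverse metric
`g^{ij}` and the Christoffel symbols `Γ^k_{ij}` of a chart of the domain `(M,g)`, and
the Christoffel symbols `Γ^α_{βγ}` of a chart of the target `(N,h)`. -/
structure ChartData (m n : ℕ) where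
  ginv : (Fin m → ℝ) → Fin m → Fin m → ℝ
  ΓM : (Fin m → ℝ) → Fin m → Fin m → Fin m → ℝ
  ΓN : (Fin n → ℝ) → Fin n → Fin n → Fin n → ℝ

variable {m n : ℕ}

/-- Smoothness of the domain data. -/
def ChartData.SmoothDomain (P : ChartData m n) : Prop :=
  (∀ i j, ContDiff ℝ (⊤ : ℕ∞) fun x => P.ginv x i j) ∧
  (∀ k i j, ContDiff ℝ (⊤ : ℕ∞) fun x => P.ΓM x k i j)

/-- Smoothness of the target Christoffel symbols. -/
def ChartData.SmoothTarget (P : ChartData m n) : Prop :=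
  ∀ α β γ, ContDiff ℝ (⊤ : ℕ∞) fun y => P.ΓN y α β γ

/-- The chart data comes from Riemannian metrics: `g^{ij}` is symmetric and positive
definite, and the Christoffel symbols are symmetric in their lower indices. -/
def ChartData.Riemannian (P : ChartData m n) : Prop :=
  (∀ x i j, P.ginv x i j = P.ginv x j i) ∧
  (∀ x (v : Fin m → ℝ), v ≠ 0 → 0 < ∑ i, ∑ j, P.ginv x i j * v i * v j) ∧
  (∀ x k i j, P.ΓM x k i j = P.ΓM x k j i) ∧
  (∀ y α β γ, P.ΓN y α β γ = P.ΓN y α γ β)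

/-- The Laplace–Beltrami operator on scalar functions:
`-Δ f = g^{ij} ∂²f/∂x^i∂x^j - g^{ij} Γ^k_{ij} ∂f/∂x^k`. -/
def lap (P : ChartData m n) (f : (Fin m → ℝ) → ℝ) (x : Fin m → ℝ) : ℝ :=
  -((∑ i, ∑ j, P.ginv x i j * pd i (fun z => pd j f z) x)
    - ∑ i, ∑ j, ∑ k, P.ginv x i j * P.ΓM x k i j * pd k f x)

/-- `φ_i^β = ∂φ^β/∂x^i`. -/
def dphi (φ : (Fin m → ℝ) → Fin n → ℝ) (x : Fin m → ℝ) (i : Fin m) (β : Fin n) : ℝ :=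
  pd i (fun z => φ z β) x

/-- `⟨dφ^β, dψ^γ⟩ = g^{ij} φ_i^β ψ_j^γ`. -/
def dpair (P : ChartData m n) (φ ψ : (Fin m → ℝ) → Fin n → ℝ) (x : Fin m → ℝ)
    (β γ : Fin n) : ℝ :=
  ∑ i, ∑ j, P.ginv x i j * dphi φ x i β * dphi ψ x j γ

/-- Components `R^α_{δβγ}` of the curvature tensor of the target, with the sign
convention `R(∂/∂y^β, ∂/∂y^γ)∂/∂y^δ = R^α_{δβγ} ∂/∂y^α` of the paper. -/
def Rc (P : ChartData m n) (y : Fin n → ℝ) (α δ β γ : Fin n) : ℝ :=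
  pd β (fun z => P.ΓN z α γ δ) y - pd γ (fun z => P.ΓN z α β δ) y
    + ∑ μ, (P.ΓN y α β μ * P.ΓN y μ γ δ - P.ΓN y α γ μ * P.ΓN y μ β δ)

/-- `2S^α_{βωϑ} = ∂Γ^α_{βϑ}/∂y^ω + Γ^γ_{βϑ}Γ^α_{ωγ} + ∂Γ^α_{ωϑ}/∂y^β + Γ^γ_{ωϑ}Γ^α_{βγ}`. -/
def Scoef (P : ChartData m n) (y : Fin n → ℝ) (α β ω ϑ : Fin n) : ℝ :=
  (pd ω (fun z => P.ΓN z α β ϑ) y + (∑ γ, P.ΓN y γ β ϑ * P.ΓN y α ω γ)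
    + pd β (fun z => P.ΓN z α ω ϑ) y + ∑ γ, P.ΓN y γ ω ϑ * P.ΓN y α β γ) / 2

/-- The operator
`A^α(η,ξ) = ξ_i^ϑ(-2 g^{ij} φ_j^β Γ^α_{βϑ}) + η^ϑ((Δφ^β)Γ^α_{βϑ} - g^{ij} φ_j^β φ_i^ω S^α_{βωϑ})`. -/
def Aop (P : ChartData m n) (φ : (Fin m → ℝ) → Fin n → ℝ) (η : Fin n → ℝ)
    (ξ : Fin m → Fin n → ℝ) (x : Fin m → ℝ) (α : Fin n) : ℝ :=
  (∑ ϑ, ∑ i, ξ i ϑ * (-2 * ∑ j, ∑ β, P.ginv x i j * dphi φ x j β * P.ΓN (φ x) α β ϑ))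
    + ∑ ϑ, η ϑ * ((∑ β, lap P (fun z => φ z β) x * P.ΓN (φ x) α β ϑ)
        - ∑ i, ∑ j, ∑ β, ∑ ω,
            P.ginv x i j * dphi φ x j β * dphi φ x i ω * Scoef P (φ x) α β ω ϑ)

/-- The operator `A` applied to (the components of) a section `σ` of `φ⁻¹TN`:
`A(σ, ∂σ)`. -/
def Asec (P : ChartData m n) (φ σ : (Fin m → ℝ) → Fin n → ℝ) (x : Fin m → ℝ)
    (α : Fin n) : ℝ :=
  Aop P φ (σ x) (fun i ϑ => pd i (fun z => σ z ϑ) x) x α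

/-- Components of the tension field `τ^α(φ) = -Δφ^α + g^{ij} Γ^α_{ϑβ} φ_i^ϑ φ_j^β`. -/
def tension (P : ChartData m n) (φ : (Fin m → ℝ) → Fin n → ℝ) (x : Fin m → ℝ)
    (α : Fin n) : ℝ :=
  -(lap P (fun z => φ z α) x)
    + ∑ i, ∑ j, ∑ ϑ, ∑ β,
        P.ginv x i j * P.ΓN (φ x) α ϑ β * dphi φ x i ϑ * dphi φ x j β

/-- The components `u_j` of `Δ̄^j τ(φ)`: `u_0 = τ(φ)` and
`u_{j+1} = Δ u_j + A(u_j, ∂u_j)` (local expression of the rough Laplacian). -/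
def uvar (P : ChartData m n) (φ : (Fin m → ℝ) → Fin n → ℝ) :
    ℕ → (Fin m → ℝ) → Fin n → ℝ
  | 0 => tension P φ
  | j+1 => fun x α => lap P (fun z => uvar P φ j z α) x + Asec P φ (uvar P φ j) x α

/-- `v_j = du_j`, i.e. `v_{j i}^α = ∂u_j^α/∂x^i`. -/
def vvar (P : ChartData m n) (φ : (Fin m → ℝ) → Fin n → ℝ) (j : ℕ) (x : Fin m → ℝ)
    (i : Fin m) (α : Fin n) : ℝ :=
  pd i (fun z => uvar P φ j z α) x

/-- Components of the pull-back covariant derivative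
`(∇̄_{∂_i} σ)^γ = ∂σ^γ/∂x^i + Γ^γ_{βδ}(φ) φ_i^β σ^δ`. -/
def covD (P : ChartData m n) (φ σ : (Fin m → ℝ) → Fin n → ℝ) (i : Fin m)
    (x : Fin m → ℝ) (γ : Fin n) : ℝ :=
  pd i (fun z => σ z γ) x + ∑ β, ∑ δ, P.ΓN (φ x) γ β δ * dphi φ x i β * σ x δ

/-- `(Tr_g R^N(X, dφ(·))dφ(·))^α`. -/
def trRphi (P : ChartData m n) (φ X : (Fin m → ℝ) → Fin n → ℝ) (x : Fin m → ℝ)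
    (α : Fin n) : ℝ :=
  ∑ i, ∑ j, ∑ β, ∑ γ, ∑ δ,
    P.ginv x i j * Rc P (φ x) α δ β γ * X x β * dphi φ x i γ * dphi φ x j δ

/-- `(Tr_g R^N(dφ(·), X)dφ(·))^α`. -/
def trRphi2 (P : ChartData m n) (φ X : (Fin m → ℝ) → Fin n → ℝ) (x : Fin m → ℝ)
    (α : Fin n) : ℝ :=
  ∑ i, ∑ j, ∑ β, ∑ γ, ∑ δ,
    P.ginv x i j * Rc P (φ x) α δ β γ * dphi φ x i β * X x γ * dphi φ x j δ

/-- `(Tr_g R^N(∇̄_{(·)}W, Z)dφ(·))^α`. -/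
def trRD (P : ChartData m n) (φ W Z : (Fin m → ℝ) → Fin n → ℝ) (x : Fin m → ℝ)
    (α : Fin n) : ℝ :=
  ∑ i, ∑ j, ∑ β, ∑ γ, ∑ δ,
    P.ginv x i j * Rc P (φ x) α δ β γ * covD P φ W i x β * Z x γ * dphi φ x j δ

/-- `(Tr_g R^N(W, ∇̄_{(·)}Z)dφ(·))^α`. -/
def trRD2 (P : ChartData m n) (φ W Z : (Fin m → ℝ) → Fin n → ℝ) (x : Fin m → ℝ)
    (α : Fin n) : ℝ :=
  ∑ i, ∑ j, ∑ β, ∑ γ, ∑ δ,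
    P.ginv x i j * Rc P (φ x) α δ β γ * W x β * covD P φ Z i x γ * dphi φ x j δ

/-- Local components of Maeta's `k`-tension field `τ_k(φ)`, for `k = 2s`:
`τ_{2s}(φ) = Δ̄^{2s-1}τ(φ) - R^N(Δ̄^{2s-2}τ(φ), dφ(e_j))dφ(e_j)
  - Σ_{ℓ=1}^{s-1}( R^N(∇̄_{e_j}Δ̄^{s+ℓ-2}τ(φ), Δ̄^{s-ℓ-1}τ(φ))dφ(e_j)
                 - R^N(Δ̄^{s+ℓ-2}τ(φ), ∇̄_{e_j}Δ̄^{s-ℓ-1}τ(φ))dφ(e_j) )`,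
and for `k = 2s+1`:
`τ_{2s+1}(φ) = Δ̄^{2s}τ(φ) - R^N(Δ̄^{2s-1}τ(φ), dφ(e_j))dφ(e_j)
  - Σ_{ℓ=1}^{s-1}( R^N(∇̄_{e_j}Δ̄^{s+ℓ-1}τ(φ), Δ̄^{s-ℓ-1}τ(φ))dφ(e_j)
                 - R^N(Δ̄^{s+ℓ-1}τ(φ), ∇̄_{e_j}Δ̄^{s-ℓ-1}τ(φ))dφ(e_j) )
  - R^N(∇̄_{e_j}Δ̄^{s-1}τ(φ), Δ̄^{s-1}τ(φ))dφ(e_j)`. -/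
def tauK (P : ChartData m n) (φ : (Fin m → ℝ) → Fin n → ℝ) (k : ℕ) (x : Fin m → ℝ)
    (α : Fin n) : ℝ :=
  if Even k then
    uvar P φ (k-1) x α - trRphi P φ (uvar P φ (k-2)) x α
      - ∑ ℓ ∈ Finset.Icc 1 (k/2 - 1),
          (trRD P φ (uvar P φ (k/2 + ℓ - 2)) (uvar P φ (k/2 - ℓ - 1)) x α
            - trRD2 P φ (uvar P φ (k/2 + ℓ - 2)) (uvar P φ (k/2 - ℓ - 1)) x α)
  else
    uvar P φ (k-1) x α - trRphi P φ (uvar P φ (k-2)) x α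
      - (∑ ℓ ∈ Finset.Icc 1 (k/2 - 1),
          (trRD P φ (uvar P φ (k/2 + ℓ - 1)) (uvar P φ (k/2 - ℓ - 1)) x α
            - trRD2 P φ (uvar P φ (k/2 + ℓ - 1)) (uvar P φ (k/2 - ℓ - 1)) x α))
      - trRD P φ (uvar P φ (k/2 - 1)) (uvar P φ (k/2 - 1)) x α

/-- Components `(∇dφ)(∂_i,∂_j)^α` of the second fundamental form of `φ`. -/
def sff (P : ChartData m n) (φ : (Fin m → ℝ) → Fin n → ℝ) (x : Fin m → ℝ)
    (i j : Fin m) (α : Fin n) : ℝ :=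
  pd i (fun z => dphi φ z j α) x - (∑ k, P.ΓM x k i j * dphi φ x k α)
    + ∑ β, ∑ γ, P.ΓN (φ x) α β γ * dphi φ x i β * dphi φ x j γ

/-! Since `v₀ = dτ(φ)` and `τ(φ)^α = -Δφ^α + g^{ij}Γ^α_{ϑβ}(φ)φ_i^ϑφ_j^β`, the third derivatives
in `Δφ_k^α + v₀ₖ^α` cancel by the symmetry of second derivatives. What is left is, by the chain
rule, a smooth function of `(x, φ, dφ, ∂²φ)`, hence of `(x, φ, dφ, ∇dφ)` after solving the
definition of `∇dφ` for `∂²φ`. So `Δ(dφ - dφ̃)` is a difference of values of one smooth function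
`E`, minus `v₀ - ṽ₀`, and `E` is Lipschitz on the compact set swept out over `closure D` by the
jets of `φ` and `φ̃`. -/

open scoped ContDiff

section PartialDerivatives

variable {d : ℕ} {f g : (Fin d → ℝ) → ℝ} {x : Fin d → ℝ}

theorem contDiff_pd (hf : ContDiff ℝ ∞ f) (i : Fin d) : ContDiff ℝ ∞ (pd i f) :=
  (hf.fderiv_right (m := ∞) le_rfl).clm_apply contDiff_const

theorem pd_neg (i : Fin d) : pd i (fun z => -f z) x = -pd i f x := by
  simp [pd]

theorem pd_add (i : Fin d) (hf : DifferentiableAt ℝ f x) (hg : DifferentiableAt ℝ g x) :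
    pd i (fun z => f z + g z) x = pd i f x + pd i g x := by
  simp [pd, fderiv_fun_add hf hg]

theorem pd_sub (i : Fin d) (hf : DifferentiableAt ℝ f x) (hg : DifferentiableAt ℝ g x) :
    pd i (fun z => f z - g z) x = pd i f x - pd i g x := by
  simp [pd, fderiv_fun_sub hf hg]

theorem pd_mul (i : Fin d) (hf : DifferentiableAt ℝ f x) (hg : DifferentiableAt ℝ g x) :
    pd i (fun z => f z * g z) x = pd i f x * g x + f x * pd i g x := by
  simp [pd, fderiv_fun_mul hf hg]
  ring

theorem pd_sum {ι : Type*} {s : Finset ι} {F : ι → (Fin d → ℝ) → ℝ} (i : Fin d)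
    (hF : ∀ j ∈ s, DifferentiableAt ℝ (F j) x) :
    pd i (fun z => ∑ j ∈ s, F j z) x = ∑ j ∈ s, pd i (F j) x := by
  simp [pd, fderiv_fun_sum hF]

theorem pd_comp {E : Type*} [NormedAddCommGroup E] [NormedSpace ℝ E] {q : E → ℝ}
    {γ : (Fin d → ℝ) → E} (i : Fin d) (hq : DifferentiableAt ℝ q (γ x))
    (hγ : DifferentiableAt ℝ γ x) :
    pd i (fun z => q (γ z)) x = fderiv ℝ q (γ x) (fderiv ℝ γ x (Pi.single i 1)) := by
  simp [pd, fderiv_fun_comp x hq hγ]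

theorem pd_comm (hf : ContDiff ℝ ∞ f) (i j : Fin d) (x : Fin d → ℝ) :
    pd i (pd j f) x = pd j (pd i f) x := by
  have hd : DifferentiableAt ℝ (fderiv ℝ f) x :=
    (hf.fderiv_right (m := ∞) le_rfl).differentiable (by simp) x
  have hpd : ∀ a b : Fin d,
      pd a (pd b f) x = fderiv ℝ (fderiv ℝ f) x (Pi.single a 1) (Pi.single b 1) := by
    intro a b
    change fderiv ℝ (fun z => fderiv ℝ f z (Pi.single b 1)) x (Pi.single a 1) = _
    simp [fderiv_clm_apply hd (differentiableAt_const _)]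
  rw [hpd, hpd, (hf.contDiffAt.isSymmSndFDerivAt
    (by simpa using WithTop.coe_le_coe.2 (le_top : (2 : ℕ∞) ≤ ⊤))).eq]

end PartialDerivatives

section Laplacian

variable {P : ChartData m n} {f g : (Fin m → ℝ) → ℝ}

theorem contDiff_lap (hP : P.SmoothDomain) (hf : ContDiff ℝ ∞ f) : ContDiff ℝ ∞ (lap P f) := by
  have hg := hP.1
  have hΓ := hP.2
  have hf1 : ∀ l, ContDiff ℝ ∞ (pd l f) := contDiff_pd hf
  have hf2 : ∀ i j, ContDiff ℝ ∞ (fun z => pd i (fun z => pd j f z) z) :=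
    fun i j => contDiff_pd (hf1 j) i
  unfold lap
  fun_prop

theorem lap_sub (hf : ContDiff ℝ ∞ f) (hg : ContDiff ℝ ∞ g) (x : Fin m → ℝ) :
    lap P (fun z => f z - g z) x = lap P f x - lap P g x := by
  have hf0 : Differentiable ℝ f := hf.differentiable (by simp)
  have hg0 : Differentiable ℝ g := hg.differentiable (by simp)
  have hf1 : ∀ j, Differentiable ℝ (pd j f) := fun j => (contDiff_pd hf j).differentiable (by simp)
  have hg1 : ∀ j, Differentiable ℝ (pd j g) := fun j => (contDiff_pd hg j).differentiable (by simp)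
  simp (disch := fun_prop) only [lap, pd_sub]
  simp only [mul_sub, Finset.sum_sub_distrib]
  ring

theorem lap_pd_sub_pd_lap (hP : P.SmoothDomain) (hf : ContDiff ℝ ∞ f) (k : Fin m)
    (x : Fin m → ℝ) :
    lap P (pd k f) x - pd k (lap P f) x
      = (∑ i, ∑ j, pd k (fun z => P.ginv z i j) x * pd i (pd j f) x)
        - ∑ i, ∑ j, ∑ l, pd k (fun z => P.ginv z i j * P.ΓM z l i j) x * pd l f x := by
  have hg : ∀ i j, Differentiable ℝ fun z => P.ginv z i j :=
    fun i j => (hP.1 i j).differentiable (by simp)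
  have hΓ : ∀ l i j, Differentiable ℝ fun z => P.ΓM z l i j :=
    fun l i j => (hP.2 l i j).differentiable (by simp)
  have hf1 : ∀ l, Differentiable ℝ (pd l f) := fun l => (contDiff_pd hf l).differentiable (by simp)
  have hf2 : ∀ i j, Differentiable ℝ (pd i (pd j f)) :=
    fun i j => (contDiff_pd (contDiff_pd hf j) i).differentiable (by simp)
  have hcomm2 : ∀ l, pd l (pd k f) x = pd k (pd l f) x := fun l => pd_comm hf l k x
  have hcomm3 : ∀ i j, pd i (pd j (pd k f)) x = pd k (pd i (pd j f)) x := by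
    intro i j
    rw [show pd j (pd k f) = pd k (pd j f) from funext (pd_comm hf j k),
      pd_comm (contDiff_pd hf j) i k x]
  change lap P (pd k f) x - pd k (fun z => lap P f z) x = _
  simp (disch := (intros; fun_prop)) only [lap, pd_neg, pd_sub, pd_sum, pd_mul]
  simp only [hcomm2, hcomm3, Finset.sum_add_distrib]
  ring

end Laplacian

section Jets

variable (P : ChartData m n)

abbrev Jet1 (m n : ℕ) := (Fin m → ℝ) × (Fin n → ℝ) × (Fin m × Fin n → ℝ)

def jet1 (φ : (Fin m → ℝ) → Fin n → ℝ) (x : Fin m → ℝ) : Jet1 m n :=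
  (x, φ x, fun p => dphi φ x p.1 p.2)

/-- The quadratic part of the tension: `τ^α(φ) = -Δφ^α + tensionQuad P α (jet1 φ)`. -/
def tensionQuad (α : Fin n) (w : Jet1 m n) : ℝ :=
  ∑ i, ∑ j, ∑ ϑ, ∑ β, P.ginv w.1 i j * P.ΓN w.2.1 α ϑ β * w.2.2 (i, ϑ) * w.2.2 (j, β)

abbrev SffJet (m n : ℕ) := (Fin n → ℝ) × (Fin m × Fin n → ℝ) × (Fin m × Fin m × Fin n → ℝ)

def sffJet (φ : (Fin m → ℝ) → Fin n → ℝ) (x : Fin m → ℝ) : SffJet m n :=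
  (φ x, fun p => dphi φ x p.1 p.2, fun q => sff P φ x q.1 q.2.1 q.2.2)

/-- The second derivatives `∂_i∂_jφ^α`, recovered from `(x, φ, dφ, ∇dφ)` by solving the
definition of `∇dφ` for them. -/
def hessOfSff (x : Fin m → ℝ) (J : SffJet m n) (i j : Fin m) (α : Fin n) : ℝ :=
  J.2.2 (i, j, α) + (∑ l, P.ΓM x l i j * J.2.1 (l, α))
    - ∑ β, ∑ γ, P.ΓN J.1 α β γ * J.2.1 (i, β) * J.2.1 (j, γ)

/-- `Δφ_k^α + v₀ₖ^α` as a function of `(x, φ, dφ, ∇dφ)`: the commutator `[Δ, ∂_k]φ^α` plus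
`∂_k` of the quadratic part of the tension. -/
def lapDphiRemainder (x : Fin m → ℝ) (J : SffJet m n) (k : Fin m) (α : Fin n) : ℝ :=
  (∑ i, ∑ j, pd k (fun z => P.ginv z i j) x * hessOfSff P x J i j α)
    - (∑ i, ∑ j, ∑ l, pd k (fun z => P.ginv z i j * P.ΓM z l i j) x * J.2.1 (l, α))
    + fderiv ℝ (tensionQuad P α) (x, J.1, J.2.1)
        (Pi.single k 1, fun μ => J.2.1 (k, μ), fun q => hessOfSff P x J k q.1 q.2)

variable {P} {φ : (Fin m → ℝ) → Fin n → ℝ}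

theorem contDiff_dphi (hφ : ContDiff ℝ ∞ φ) (i : Fin m) (β : Fin n) :
    ContDiff ℝ ∞ fun z => dphi φ z i β :=
  contDiff_pd (contDiff_pi.1 hφ β) i

theorem differentiable_jet1 (hφ : ContDiff ℝ ∞ φ) : Differentiable ℝ (jet1 φ) := by
  have hφ1 : Differentiable ℝ φ := hφ.differentiable (by simp)
  have hdφ : ∀ i β, Differentiable ℝ fun z => dphi φ z i β :=
    fun i β => (contDiff_dphi hφ i β).differentiable (by simp)
  unfold jet1
  fun_prop

theorem pd_comp_jet1 (hφ : ContDiff ℝ ∞ φ) {q : Jet1 m n → ℝ} {x : Fin m → ℝ}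
    (hq : DifferentiableAt ℝ q (jet1 φ x)) (k : Fin m) :
    pd k (fun z => q (jet1 φ z)) x
      = fderiv ℝ q (jet1 φ x) (Pi.single k 1, fun μ => dphi φ x k μ,
          fun p => pd k (fun z => dphi φ z p.1 p.2) x) := by
  have hφ1 : Differentiable ℝ φ := hφ.differentiable (by simp)
  have hdφ : ∀ p : Fin m × Fin n, Differentiable ℝ fun z => dphi φ z p.1 p.2 :=
    fun p => (contDiff_dphi hφ p.1 p.2).differentiable (by simp)
  rw [pd_comp k hq (differentiable_jet1 hφ x)]
  congr 1
  unfold jet1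
  rw [DifferentiableAt.fderiv_prodMk (by fun_prop) (by fun_prop),
    DifferentiableAt.fderiv_prodMk (by fun_prop) (by fun_prop), fderiv_pi (fun p => hdφ p x)]
  ext μ <;> simp [dphi, pd, fderiv_apply (hφ1 x)]

theorem contDiff_tensionQuad (hPdom : P.SmoothDomain) (hPtar : P.SmoothTarget) (α : Fin n) :
    ContDiff ℝ ∞ (tensionQuad P α) := by
  have hg := hPdom.1
  have hΓ : ∀ α β γ, ContDiff ℝ ∞ fun y => P.ΓN y α β γ := hPtar
  unfold tensionQuad
  fun_prop

theorem pd_dphi_eq_hessOfSff (x : Fin m → ℝ) (i j : Fin m) (α : Fin n) :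
    pd i (fun z => dphi φ z j α) x = hessOfSff P x (sffJet P φ x) i j α := by
  simp only [hessOfSff, sffJet, sff]
  ring

theorem lap_dphi_add_vvar_zero (hPdom : P.SmoothDomain) (hPtar : P.SmoothTarget)
    (hφ : ContDiff ℝ ∞ φ) (x : Fin m → ℝ) (k : Fin m) (α : Fin n) :
    lap P (fun z => dphi φ z k α) x + vvar P φ 0 x k α
      = lapDphiRemainder P x (sffJet P φ x) k α := by
  have hφα : ContDiff ℝ ∞ fun z => φ z α := contDiff_pi.1 hφ α
  have hq : Differentiable ℝ (tensionQuad P α) :=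
    (contDiff_tensionQuad hPdom hPtar α).differentiable (by simp)
  have hlap : Differentiable ℝ (lap P fun z => φ z α) :=
    (contDiff_lap hPdom hφα).differentiable (by simp)
  have hjet : Differentiable ℝ (jet1 φ) := differentiable_jet1 hφ
  have hvvar : vvar P φ 0 x k α
      = -pd k (lap P fun z => φ z α) x + pd k (fun z => tensionQuad P α (jet1 φ z)) x := by
    change pd k (fun z => -lap P (fun z => φ z α) z + tensionQuad P α (jet1 φ z)) x = _
    rw [pd_add k (by fun_prop) (by fun_prop), pd_neg]
  have hcomm : lap P (fun z => dphi φ z k α) x - pd k (lap P fun z => φ z α) x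
      = (∑ i, ∑ j, pd k (fun z => P.ginv z i j) x * pd i (fun z => dphi φ z j α) x)
        - ∑ i, ∑ j, ∑ l, pd k (fun z => P.ginv z i j * P.ΓM z l i j) x * dphi φ x l α :=
    lap_pd_sub_pd_lap hPdom hφα k x
  rw [hvvar, pd_comp_jet1 hφ (hq _) k]
  simp only [lapDphiRemainder, ← pd_dphi_eq_hessOfSff]
  rw [← add_assoc, ← sub_eq_add_neg, hcomm]
  rfl

theorem lap_dphi_sub_eq (hPdom : P.SmoothDomain) (hPtar : P.SmoothTarget)
    {ψ : (Fin m → ℝ) → Fin n → ℝ} (hφ : ContDiff ℝ ∞ φ) (hψ : ContDiff ℝ ∞ ψ)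
    (x : Fin m → ℝ) (k : Fin m) (α : Fin n) :
    lap P (fun z => dphi φ z k α - dphi ψ z k α) x
      = (lapDphiRemainder P x (sffJet P φ x) k α - lapDphiRemainder P x (sffJet P ψ x) k α)
        - (vvar P φ 0 x k α - vvar P ψ 0 x k α) := by
  rw [lap_sub (contDiff_dphi hφ k α) (contDiff_dphi hψ k α),
    ← lap_dphi_add_vvar_zero hPdom hPtar hφ, ← lap_dphi_add_vvar_zero hPdom hPtar hψ]
  ring

theorem contDiff_lapDphiRemainder (hPdom : P.SmoothDomain) (hPtar : P.SmoothTarget) :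
    ContDiff ℝ ∞ fun w : (Fin m → ℝ) × SffJet m n =>
      fun kα : Fin m × Fin n => lapDphiRemainder P w.1 w.2 kα.1 kα.2 := by
  have hΓM := hPdom.2
  have hΓN : ∀ α β γ, ContDiff ℝ ∞ fun y => P.ΓN y α β γ := hPtar
  have hdg : ∀ k i j, ContDiff ℝ ∞ (pd k fun z => P.ginv z i j) :=
    fun k i j => contDiff_pd (hPdom.1 i j) k
  have hdgΓ : ∀ k i j l, ContDiff ℝ ∞ (pd k fun z => P.ginv z i j * P.ΓM z l i j) :=
    fun k i j l => contDiff_pd ((hPdom.1 i j).mul (hPdom.2 l i j)) k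
  have hdq : ∀ α, ContDiff ℝ ∞ (fderiv ℝ (tensionQuad P α)) :=
    fun α => (contDiff_tensionQuad hPdom hPtar α).fderiv_right le_rfl
  have hH : ∀ i j α, ContDiff ℝ ∞ fun w : (Fin m → ℝ) × SffJet m n =>
      hessOfSff P w.1 w.2 i j α := by
    intro i j α
    unfold hessOfSff
    fun_prop
  refine contDiff_pi.2 fun kα => ?_
  unfold lapDphiRemainder
  fun_prop

theorem continuous_sffJet (hPdom : P.SmoothDomain) (hPtar : P.SmoothTarget)
    (hφ : ContDiff ℝ ∞ φ) : Continuous (sffJet P φ) := by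
  have hΓM : ∀ k i j, Continuous fun x => P.ΓM x k i j :=
    fun k i j => (hPdom.2 k i j).continuous
  have hΓN : ∀ α β γ, Continuous fun y => P.ΓN y α β γ :=
    fun α β γ => (hPtar α β γ).continuous
  have hφ0 : Continuous φ := hφ.continuous
  have hdφ : ∀ i β, Continuous fun z => dphi φ z i β :=
    fun i β => (contDiff_dphi hφ i β).continuous
  have hd2φ : ∀ i j β, Continuous (pd i fun z => dphi φ z j β) :=
    fun i j β => (contDiff_pd (contDiff_dphi hφ j β) i).continuous
  unfold sffJet sff
  fun_prop

end Jets

theorem exists_norm_sub_le_of_contDiff {X E G : Type*} [NormedAddCommGroup X] [NormedSpace ℝ X]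
    [NormedAddCommGroup E] [NormedSpace ℝ E] [NormedAddCommGroup G] [NormedSpace ℝ G]
    {F : X × E → G} (hF : ContDiff ℝ 1 F) {K : Set X} (hK : IsCompact K) {a b : X → E}
    (ha : ContinuousOn a K) (hb : ContinuousOn b K) :
    ∃ C > 0, ∀ x ∈ K, ‖F (x, a x) - F (x, b x)‖ ≤ C * ‖a x - b x‖ := by
  have hS : IsCompact ((fun x => (x, a x)) '' K ∪ (fun x => (x, b x)) '' K) :=
    (hK.image_of_continuousOn (continuousOn_id.prodMk ha)).union
      (hK.image_of_continuousOn (continuousOn_id.prodMk hb))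
  obtain ⟨L, hL⟩ := hF.locallyLipschitz.locallyLipschitzOn.exists_lipschitzOnWith_of_compact hS
  refine ⟨L + 1, by positivity, fun x hx => ?_⟩
  have hlip := hL.dist_le_mul _ (Or.inl ⟨x, hx, rfl⟩) _ (Or.inr ⟨x, hx, rfl⟩)
  rw [dist_eq_norm, Prod.dist_eq, dist_self, dist_eq_norm,
    max_eq_right (norm_nonneg _)] at hlip
  nlinarith [norm_nonneg (a x - b x)]

section EuclideanNorm

variable {ι : Type} [Fintype ι]

theorem vnorm_nonneg (f : ι → ℝ) : 0 ≤ vnorm f :=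
  Real.sqrt_nonneg _

theorem abs_le_vnorm (f : ι → ℝ) (i : ι) : |f i| ≤ vnorm f := by
  rw [vnorm, ← Real.sqrt_sq_eq_abs]
  exact Real.sqrt_le_sqrt (Finset.single_le_sum (fun j _ => sq_nonneg (f j)) (Finset.mem_univ i))

theorem norm_le_vnorm (f : ι → ℝ) : ‖f‖ ≤ vnorm f :=
  (pi_norm_le_iff_of_nonneg (vnorm_nonneg f)).2 fun i => abs_le_vnorm f i

theorem vnorm_le_card_mul {f : ι → ℝ} {b : ℝ} (hf : ∀ i, |f i| ≤ b) :
    vnorm f ≤ Fintype.card ι * b := by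
  have hsq : ∑ i, f i ^ 2 ≤ (∑ i, |f i|) ^ 2 := by
    simpa only [sq_abs] using Finset.sum_sq_le_sq_sum_of_nonneg fun i _ => abs_nonneg (f i)
  calc vnorm f ≤ ∑ i, |f i| :=
        Real.sqrt_le_iff.2 ⟨Finset.sum_nonneg fun i _ => abs_nonneg _, hsq⟩
    _ ≤ ∑ _i : ι, b := Finset.sum_le_sum fun i _ => hf i
    _ = Fintype.card ι * b := by simp

end EuclideanNorm

theorem norm_sffJet_sub_le (P : ChartData m n) (φ ψ : (Fin m → ℝ) → Fin n → ℝ)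
    (x : Fin m → ℝ) :
    ‖sffJet P φ x - sffJet P ψ x‖
      ≤ vnorm (fun α : Fin n => φ x α - ψ x α)
        + vnorm (fun p : Fin m × Fin n => dphi φ x p.1 p.2 - dphi ψ x p.1 p.2)
        + vnorm (fun q : Fin m × Fin m × Fin n =>
            sff P φ x q.1 q.2.1 q.2.2 - sff P ψ x q.1 q.2.1 q.2.2) := by
  have h1 : ‖(sffJet P φ x - sffJet P ψ x).1‖ ≤ vnorm (fun α : Fin n => φ x α - ψ x α) :=
    norm_le_vnorm _
  have h2 : ‖(sffJet P φ x - sffJet P ψ x).2.1‖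
      ≤ vnorm (fun p : Fin m × Fin n => dphi φ x p.1 p.2 - dphi ψ x p.1 p.2) :=
    norm_le_vnorm _
  have h3 : ‖(sffJet P φ x - sffJet P ψ x).2.2‖ ≤ vnorm (fun q : Fin m × Fin m × Fin n =>
      sff P φ x q.1 q.2.1 q.2.2 - sff P ψ x q.1 q.2.1 q.2.2) :=
    norm_le_vnorm _
  have := vnorm_nonneg (fun α : Fin n => φ x α - ψ x α)
  have := vnorm_nonneg (fun p : Fin m × Fin n => dphi φ x p.1 p.2 - dphi ψ x p.1 p.2)
  have := vnorm_nonneg (fun q : Fin m × Fin m × Fin n =>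
    sff P φ x q.1 q.2.1 q.2.2 - sff P ψ x q.1 q.2.1 q.2.2)
  exact max_le (by linarith) (max_le (by linarith) (by linarith))

theorem estimate_laplacian_difference_of_differentials_general
    {m n : ℕ} (P : ChartData m n)
    (hPdom : P.SmoothDomain) (hPtar : P.SmoothTarget)
    (φ ψ : (Fin m → ℝ) → Fin n → ℝ)
    (hφ : ContDiff ℝ (⊤ : ℕ∞) φ) (hψ : ContDiff ℝ (⊤ : ℕ∞) ψ)
    (D : Set (Fin m → ℝ)) (hDcpt : IsCompact (closure D)) :
    ∃ C > 0, ∀ x ∈ D,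
      vnorm (fun p : Fin m × Fin n =>
          lap P (fun z => dphi φ z p.1 p.2 - dphi ψ z p.1 p.2) x)
        ≤ C * (vnorm (fun α : Fin n => φ x α - ψ x α)
          + vnorm (fun p : Fin m × Fin n => dphi φ x p.1 p.2 - dphi ψ x p.1 p.2)
          + vnorm (fun p : Fin m × Fin m × Fin n =>
              sff P φ x p.1 p.2.1 p.2.2 - sff P ψ x p.1 p.2.1 p.2.2)
          + vnorm (fun p : Fin m × Fin n => vvar P φ 0 x p.1 p.2 - vvar P ψ 0 x p.1 p.2)) := by
  obtain ⟨C, hC, hlip⟩ := exists_norm_sub_le_of_contDiff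
    ((contDiff_lapDphiRemainder hPdom hPtar).of_le (by simp))
    hDcpt (continuous_sffJet hPdom hPtar hφ).continuousOn
    (continuous_sffJet hPdom hPtar hψ).continuousOn
  refine ⟨Fintype.card (Fin m × Fin n) * (C + 1) + 1, by positivity, fun x hx => ?_⟩
  set N₀ := vnorm (fun α : Fin n => φ x α - ψ x α)
  set N₁ := vnorm (fun p : Fin m × Fin n => dphi φ x p.1 p.2 - dphi ψ x p.1 p.2)
  set N₂ := vnorm (fun p : Fin m × Fin m × Fin n =>
    sff P φ x p.1 p.2.1 p.2.2 - sff P ψ x p.1 p.2.1 p.2.2)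
  set V := vnorm (fun p : Fin m × Fin n => vvar P φ 0 x p.1 p.2 - vvar P ψ 0 x p.1 p.2)
  have hN : 0 ≤ N₀ + N₁ + N₂ ∧ 0 ≤ V :=
    ⟨add_nonneg (add_nonneg (vnorm_nonneg _) (vnorm_nonneg _)) (vnorm_nonneg _), vnorm_nonneg _⟩
  have hE := (hlip x (subset_closure hx)).trans
    (mul_le_mul_of_nonneg_left (norm_sffJet_sub_le P φ ψ x) hC.le)
  have hcomp : ∀ p : Fin m × Fin n, |lap P (fun z => dphi φ z p.1 p.2 - dphi ψ z p.1 p.2) x|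
      ≤ (C + 1) * (N₀ + N₁ + N₂ + V) := fun p => by
    have hRp : |lapDphiRemainder P x (sffJet P φ x) p.1 p.2
        - lapDphiRemainder P x (sffJet P ψ x) p.1 p.2| ≤ C * (N₀ + N₁ + N₂) :=
      (norm_le_pi_norm _ p).trans hE
    rw [lap_dphi_sub_eq hPdom hPtar hφ hψ]
    calc _ ≤ _ := abs_sub _ _
      _ ≤ C * (N₀ + N₁ + N₂) + V := add_le_add hRp (abs_le_vnorm _ p)
      _ ≤ (C + 1) * (N₀ + N₁ + N₂ + V) := by nlinarith
  calc _ ≤ Fintype.card (Fin m × Fin n) * ((C + 1) * (N₀ + N₁ + N₂ + V)) :=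
        vnorm_le_card_mul hcomp
    _ ≤ _ := by nlinarith

/-- (Lemma 2.3 of the paper.)
For two smooth maps `φ, φ̃` in the same local charts, on any open set `D` with
compact closure contained in the chart domain `U` there exists `C > 0` with
`|Δ(dφ - dφ̃)| ≤ C(|φ - φ̃| + |dφ - dφ̃| + |∇dφ - ∇dφ̃| + |v₀ - ṽ₀|)`,
where `Δ` acts componentwise on the `ℝ^{mn}`-valued function `(φ_i^α)`. -/
theorem estimate_laplacian_difference_of_differentials
    {m n : ℕ} (P : ChartData m n)
    (hPdom : P.SmoothDomain) (hPtar : P.SmoothTarget)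
    (U : Set (Fin m → ℝ)) (hUopen : IsOpen U)
    (φ ψ : (Fin m → ℝ) → Fin n → ℝ)
    (hφ : ContDiff ℝ (⊤ : ℕ∞) φ) (hψ : ContDiff ℝ (⊤ : ℕ∞) ψ)
    (D : Set (Fin m → ℝ)) (hDopen : IsOpen D) (hDcpt : IsCompact (closure D))
    (hDsub : closure D ⊆ U) :
    ∃ C > 0, ∀ x ∈ D,
      vnorm (fun p : Fin m × Fin n =>
          lap P (fun z => dphi φ z p.1 p.2 - dphi ψ z p.1 p.2) x)
        ≤ C * (vnorm (fun α : Fin n => φ x α - ψ x α)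
          + vnorm (fun p : Fin m × Fin n => dphi φ x p.1 p.2 - dphi ψ x p.1 p.2)
          + vnorm (fun p : Fin m × Fin m × Fin n =>
              sff P φ x p.1 p.2.1 p.2.2 - sff P ψ x p.1 p.2.1 p.2.2)
          + vnorm (fun p : Fin m × Fin n => vvar P φ 0 x p.1 p.2 - vvar P ψ 0 x p.1 p.2)) :=
  estimate_laplacian_difference_of_differentials_general P hPdom hPtar φ ψ hφ hψ D hDcpt

end Polyharm
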